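/- arXiv:1812.08531 — 3 statements merged into one kernel-verified Lean document; each statement's English description precedes it below -/
import Mathlib

section
/- Let (X,x), (Y,y), (T,t) be pointed schemes of finite type over ℤ. Suppose there exist pointed schemes (Z,z) and (V,v) of finite type over ℤ together with smooth morphisms Z → X and Z → Y sending the point z to x and to y respectively, and smooth morphisms V → Y and V → T sending the point v to y and to t respectively. Then there exists a pointed scheme (W,w) of finite type over ℤ together with smooth morphisms W → X and W → T sending the point w to x and to t respectively. (Consequently, smooth equivalence of pointed schemes is a transitive relation.) -/
/-!
Take `W = Z ×_Y V` with the point `w` lying over both `z` and `v`. Smoothness is stable under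
base change and composition, so both composites `W → Z → X` and `W → V → T` are smooth.
The projection `W → Z` is the base change of the smooth, hence locally finite type, map `V → Y`,
and it is quasi-compact because `V`, being of finite type over ℤ, is Noetherian; so `W` is of
finite type over ℤ along with `Z`.
-/

open AlgebraicGeometry CategoryTheory CategoryTheory.Limits

/-- A scheme is of finite type over ℤ iff its (unique) morphism to the terminal
scheme `Spec ℤ` is locally of finite type and quasi-compact. -/
def FiniteTypeOverInt (X : Scheme) : Prop :=
  LocallyOfFiniteType (terminal.from X) ∧ QuasiCompact (terminal.from X)

universe u

instance : IsLocallyNoetherian (⊤_ Scheme.{u}) :=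
  have : IsNoetherianRing (ULift.{u} ℤ) := isNoetherianRing_of_ringEquiv ℤ ULift.ringEquiv.symm
  isLocallyNoetherian_of_isOpenImmersion (terminalIsoIsTerminal specULiftZIsTerminal).hom

namespace FiniteTypeOverInt

theorem isNoetherian {X : Scheme.{u}} (hX : FiniteTypeOverInt X) : IsNoetherian X :=
  have := hX.1
  have := LocallyOfFiniteType.isLocallyNoetherian (terminal.from X)
  have := (compactSpace_iff_quasiCompact X).mpr hX.2
  ⟨⟩

theorem of_hom {W X : Scheme.{u}} (f : W ⟶ X) [LocallyOfFiniteType f] [QuasiCompact f]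
    (hX : FiniteTypeOverInt X) : FiniteTypeOverInt W := by
  have := hX.1
  have := hX.2
  rw [FiniteTypeOverInt, ← terminal.comp_from f]
  exact ⟨inferInstance, inferInstance⟩

theorem pullback {Y Z V : Scheme.{u}} (g : Z ⟶ Y) (f : V ⟶ Y) [LocallyOfFiniteType f]
    (hZ : FiniteTypeOverInt Z) (hV : FiniteTypeOverInt V) :
    FiniteTypeOverInt (Limits.pullback g f) :=
  have := hV.isNoetherian
  hZ.of_hom (pullback.fst g f)

end FiniteTypeOverInt

theorem smooth_equivalence_transitive_general
    (X Y T : Scheme) (x : X) (y : Y) (t : T)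
    (h₁ : ∃ (Z : Scheme) (z : Z) (f : Z ⟶ X) (g : Z ⟶ Y),
      FiniteTypeOverInt Z ∧ IsSmooth f ∧ IsSmooth g ∧ f.base z = x ∧ g.base z = y)
    (h₂ : ∃ (V : Scheme) (v : V) (f : V ⟶ Y) (g : V ⟶ T),
      FiniteTypeOverInt V ∧ IsSmooth f ∧ IsSmooth g ∧ f.base v = y ∧ g.base v = t) :
    ∃ (W : Scheme) (w : W) (f : W ⟶ X) (g : W ⟶ T),
      FiniteTypeOverInt W ∧ IsSmooth f ∧ IsSmooth g ∧ f.base w = x ∧ g.base w = t := by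
  obtain ⟨Z, z, f₁, g₁, hZ, (_ : Smooth f₁), (_ : Smooth g₁), rfl, hgz⟩ := h₁
  obtain ⟨V, v, f₂, g₂, hV, (_ : Smooth f₂), (_ : Smooth g₂), hfv, rfl⟩ := h₂
  obtain ⟨w, hw₁, hw₂⟩ :=
    Scheme.Pullback.exists_preimage_pullback z v (hgz.trans hfv.symm)
  refine ⟨pullback g₁ f₂, w, pullback.fst g₁ f₂ ≫ f₁, pullback.snd g₁ f₂ ≫ g₂,
    hZ.pullback g₁ f₂ hV, 
    inferInstanceAs (Smooth (_ ≫ _)), inferInstanceAs (Smooth (_ ≫ _)), ?_, ?_⟩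
  · simp [hw₁]
  · simp [hw₂]

/-- transitivity of smooth equivalence of pointed schemes of finite
type over ℤ.  If (X,x) ∼ (Y,y) via (Z,z) and (Y,y) ∼ (T,t) via (V,v), then there
is a pointed scheme (W,w) of finite type over ℤ with smooth morphisms to (X,x)
and (T,t). -/
theorem smooth_equivalence_transitive
    (X Y T : Scheme) (x : X) (y : Y) (t : T)
    (hX : FiniteTypeOverInt X) (hY : FiniteTypeOverInt Y) (hT : FiniteTypeOverInt T)
    (h₁ : ∃ (Z : Scheme) (z : Z) (f : Z ⟶ X) (g : Z ⟶ Y),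
      FiniteTypeOverInt Z ∧ IsSmooth f ∧ IsSmooth g ∧ f.base z = x ∧ g.base z = y)
    (h₂ : ∃ (V : Scheme) (v : V) (f : V ⟶ Y) (g : V ⟶ T),
      FiniteTypeOverInt V ∧ IsSmooth f ∧ IsSmooth g ∧ f.base v = y ∧ g.base v = t) :
    ∃ (W : Scheme) (w : W) (f : W ⟶ X) (g : W ⟶ T),
      FiniteTypeOverInt W ∧ IsSmooth f ∧ IsSmooth g ∧ f.base w = x ∧ g.base w = t :=
  smooth_equivalence_transitive_general X Y T x y t h₁ h₂
end

section
/- The canonical surjection T/(I·T + (Q)) → T/J satisfies: (i) for every pair of integers (γ,δ) with γ ≤ a and δ ≤ b, it restricts to a k-linear bijection from the image in T/(I·T+(Q)) of T_{(γ,δ)} onto the image in T/J of T_{(γ,δ)}; (ii) the image in T/J of T_{(γ,δ)} is zero whenever γ ≥ a+1 or δ ≥ b+1. -/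
open MvPolynomial

noncomputable section

/-- The bigrading on `T = k[x_1,…,x_n,y_1,…,y_n]` (with the `x`-variables indexed by
`Sum.inl` and the `y`-variables by `Sum.inr`): each `x_i` has bidegree `(1,0)` and
each `y_i` has bidegree `(0,1)`.  We use `ℤ × ℤ` so that components of negative
bidegree make sense (they are zero). -/
def bidegWeight (n : ℕ) : (Fin n ⊕ Fin n) → ℤ × ℤ :=
  Sum.elim (fun _ => ((1 : ℤ), (0 : ℤ))) (fun _ => ((0 : ℤ), (1 : ℤ)))

/-- A homogeneous ideal of `S = k[x_1,…,x_n]`: an ideal containing all homogeneous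
components of its elements. -/
def IsHomogeneousIdeal {k : Type} [Field k] {n : ℕ}
    (I : Ideal (MvPolynomial (Fin n) k)) : Prop :=
  ∀ f ∈ I, ∀ d : ℕ, homogeneousComponent d f ∈ I

/-- A bihomogeneous ideal of `T`: an ideal containing all bihomogeneous components
of its elements. -/
def IsBihomogeneousIdeal {k : Type} [Field k] {n : ℕ}
    (P : Ideal (MvPolynomial (Fin n ⊕ Fin n) k)) : Prop :=
  ∀ f ∈ P, ∀ γ δ : ℤ, weightedHomogeneousComponent (bidegWeight n) (γ, δ) f ∈ P

/-- `depth(S₊, S/I) ≥ d`: there exist `d` homogeneous elements of positive degree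
of `S` forming a regular sequence on the `S`-module `S/I`. -/
def DepthGE {k : Type} [Field k] {n : ℕ} (I : Ideal (MvPolynomial (Fin n) k))
    (d : ℕ) : Prop :=
  ∃ fs : List (MvPolynomial (Fin n) k), fs.length = d ∧
    (∀ f ∈ fs, ∃ m : ℕ, 0 < m ∧ f ∈ homogeneousSubmodule (Fin n) k m) ∧
    RingTheory.Sequence.IsRegular (MvPolynomial (Fin n) k ⧸ I) fs

/-- The ideal `m_x = (x_1,…,x_n)` of `T`. -/
def mxIdeal (k : Type) [Field k] (n : ℕ) : Ideal (MvPolynomial (Fin n ⊕ Fin n) k) :=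
  Ideal.span (Set.range fun i : Fin n => X (Sum.inl i))

/-- The ideal `m_y = (y_1,…,y_n)` of `T`. -/
def myIdeal (k : Type) [Field k] (n : ℕ) : Ideal (MvPolynomial (Fin n ⊕ Fin n) k) :=
  Ideal.span (Set.range fun i : Fin n => X (Sum.inr i))

/-- The quadric `Q = x_1y_1 + ⋯ + x_ny_n ∈ T`. -/
def Qpoly (k : Type) [Field k] (n : ℕ) : MvPolynomial (Fin n ⊕ Fin n) k :=
  ∑ i : Fin n, X (Sum.inl i) * X (Sum.inr i)

/-- The TNT frame `J = I·T + m_x^{a+1} + m_y^{b+1} + (Q)` of an ideal `I ⊆ S`. -/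
def frameIdeal {k : Type} [Field k] {n : ℕ} (I : Ideal (MvPolynomial (Fin n) k))
    (a b : ℕ) : Ideal (MvPolynomial (Fin n ⊕ Fin n) k) :=
  I.map (rename Sum.inl) ⊔ (mxIdeal k n) ^ (a + 1) ⊔ (myIdeal k n) ^ (b + 1)
    ⊔ Ideal.span {Qpoly k n}

/-- A `T`-linear map `φ : N → T/K` (where `N`, `K` are ideals of `T`) has bidegree
`(α,β)` if it maps every bihomogeneous element of `N` of bidegree `(γ,δ)` into the
image in `T/K` of the bidegree-`(γ+α, δ+β)` component of `T`. -/
def HomOfBidegree {k : Type} [Field k] {n : ℕ}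
    (N K : Ideal (MvPolynomial (Fin n ⊕ Fin n) k)) (α β : ℤ)
    (φ : N →ₗ[MvPolynomial (Fin n ⊕ Fin n) k]
      (MvPolynomial (Fin n ⊕ Fin n) k ⧸ K)) : Prop :=
  ∀ (γ δ : ℤ) (f : MvPolynomial (Fin n ⊕ Fin n) k) (hf : f ∈ N),
    IsWeightedHomogeneous (bidegWeight n) f (γ, δ) →
      ∃ g : MvPolynomial (Fin n ⊕ Fin n) k,
        IsWeightedHomogeneous (bidegWeight n) g (γ + α, δ + β) ∧
        φ ⟨f, hf⟩ = Ideal.Quotient.mk K g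

/-- The `k`-derivation `D_A` of `T` with `D_A(x_i) = 0` and
`D_A(y_i) = Σ_j A_{ij}·x_j`, applied to `f`. -/
def derA {k : Type} [Field k] {n : ℕ} (A : Matrix (Fin n) (Fin n) k)
    (f : MvPolynomial (Fin n ⊕ Fin n) k) : MvPolynomial (Fin n ⊕ Fin n) k :=
  ∑ i : Fin n, (∑ j : Fin n, A i j • X (Sum.inl j)) * pderiv (Sum.inr i) f

/-- The ideal `p = (y_1²,…,y_n²) + y_1·m_y ⊆ T` used in the characteristic-two
tweaked frame (`h` witnesses `0 < n` so that `y_1` makes sense). -/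
def pIdeal (k : Type) [Field k] (n : ℕ) (h : 0 < n) :
    Ideal (MvPolynomial (Fin n ⊕ Fin n) k) :=
  Ideal.span ((Set.range fun i : Fin n => (X (Sum.inr i) : MvPolynomial (Fin n ⊕ Fin n) k) ^ 2)
    ∪ (Set.range fun i : Fin n => X (Sum.inr (⟨0, h⟩ : Fin n)) * X (Sum.inr i)))

/-- The tweaked frame `J' = I·T + m_x^{a+1} + p + (Q)` of size `a` for `I`
(characteristic two). -/
def tweakedFrameIdeal {k : Type} [Field k] {n : ℕ} (I : Ideal (MvPolynomial (Fin n) k))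
    (a : ℕ) (h : 0 < n) : Ideal (MvPolynomial (Fin n ⊕ Fin n) k) :=
  I.map (rename Sum.inl) ⊔ (mxIdeal k n) ^ (a + 1) ⊔ pIdeal k n h
    ⊔ Ideal.span {Qpoly k n}

/-- Abbreviation for `S = k[x_1,…,x_n]`. -/
abbrev Spoly (k : Type) [Field k] (n : ℕ) := MvPolynomial (Fin n) k

/-- Abbreviation for `T = k[x_1,…,x_n,y_1,…,y_n]`. -/
abbrev Tpoly (k : Type) [Field k] (n : ℕ) := MvPolynomial (Fin n ⊕ Fin n) k

/-! The ideal `m_x^{a+1}` consists exactly of the polynomials all of whose monomials have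
`x`-degree at least `a+1`, and likewise for `m_y^{b+1}`. So `m_x^{a+1} + m_y^{b+1}` contains
every bihomogeneous form of bidegree `(γ,δ)` with `γ > a` or `δ > b`, which is (ii), and all
its elements have zero `(γ,δ)`-component when `γ ≤ a` and `δ ≤ b`. As `I·T + (Q)` is
bihomogeneous (`I` is homogeneous and `Q` has bidegree `(1,1)`), taking `(γ,δ)`-components
shows that a form of such a bidegree lying in `J` already lies in `I·T + (Q)`: this is the
injectivity in (i). -/

namespace Ideal.Quotient

theorem bijOn_factor_image {A : Type*} [CommRing A] {K J : Ideal A} (hKJ : K ≤ J) {s : Set A}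
    (hs : ∀ f ∈ s, ∀ g ∈ s, f - g ∈ J → f - g ∈ K) :
    Set.BijOn (factor hKJ) (mk K '' s) (mk J '' s) := by
  have himage : factor hKJ '' (mk K '' s) = mk J '' s := by
    rw [Set.image_image]
    rfl
  refine himage ▸ Set.InjOn.bijOn_image ?_
  rintro _ ⟨f, hf, rfl⟩ _ ⟨g, hg, rfl⟩ hfg
  rw [factor_mk, factor_mk, mk_eq_mk_iff_sub_mem] at hfg
  exact (mk_eq_mk_iff_sub_mem _ _).mpr (hs f hf g hg hfg)

end Ideal.Quotient

namespace MvPolynomial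

variable {σ τ R M : Type*} [CommSemiring R] {s : Set σ}

theorem one_le_weight_indicator {d : σ →₀ ℕ} {i : σ} (hi : i ∈ s) (hd : d i ≠ 0) :
    1 ≤ Finsupp.weight (s.indicator 1) d := by
  rw [Finsupp.weight_apply, Finsupp.sum]
  calc 1 ≤ d i • s.indicator 1 i := by simpa [hi] using Nat.one_le_iff_ne_zero.mpr hd
    _ ≤ _ := Finset.single_le_sum (f := fun j => d j • s.indicator (1 : σ → ℕ) j)
          (fun _ _ => Nat.zero_le _) (Finsupp.mem_support_iff.mpr hd)

theorem le_weight_of_mem_span_X_image_pow {m : ℕ} {f : MvPolynomial σ R}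
    (hf : f ∈ Ideal.span (X '' s) ^ m) :
    ∀ d ∈ f.support, m ≤ Finsupp.weight (s.indicator 1) d := by
  classical
  induction m generalizing f with
  | zero => exact fun _ _ => Nat.zero_le _
  | succ m ih =>
    rw [pow_succ'] at hf
    refine Submodule.mul_induction_on hf (fun p hp q hq d hd => ?_) (fun p q hp hq d hd => ?_)
    · obtain ⟨d₁, hd₁, d₂, hd₂, rfl⟩ := Finset.mem_add.mp (support_mul p q hd)
      obtain ⟨i, hi, hd₁i⟩ := mem_ideal_span_X_image.mp hp d₁ hd₁
      rw [map_add, add_comm m]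
      exact add_le_add (one_le_weight_indicator hi hd₁i) (ih hq d₂ hd₂)
    · rcases Finset.mem_union.mp (support_add hd) with h | h
      exacts [hp d h, hq d h]

theorem monomial_mem_span_X_image_pow (d : σ →₀ ℕ) (c : R) :
    monomial d c ∈ Ideal.span (X '' s) ^ Finsupp.weight (s.indicator 1) d := by
  induction d using Finsupp.induction_linear generalizing c with
  | zero => simp
  | add d e hd he =>
    rw [← mul_one c, ← monomial_mul, map_add, pow_add]
    exact Ideal.mul_mem_mul (hd c) (he 1)
  | single i b =>
    rw [← C_mul_X_pow_eq_monomial, Finsupp.weight_single]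
    refine Ideal.mul_mem_left _ _ ?_
    by_cases hi : i ∈ s
    · simpa [hi] using Ideal.pow_mem_pow (Ideal.subset_span (Set.mem_image_of_mem X hi)) b
    · simp [hi]

theorem mem_span_X_image_pow_iff {m : ℕ} {f : MvPolynomial σ R} :
    f ∈ Ideal.span (X '' s) ^ m ↔
      ∀ d ∈ f.support, m ≤ Finsupp.weight (s.indicator 1) d := by
  refine ⟨le_weight_of_mem_span_X_image_pow, fun h => ?_⟩
  rw [f.as_sum]
  exact Ideal.sum_mem _ fun d hd =>
    Ideal.pow_le_pow_right (h d hd) (monomial_mem_span_X_image_pow d _)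

theorem IsWeightedHomogeneous.rename [AddCommMonoid M] {f : σ → τ} {w : τ → M}
    {p : MvPolynomial σ R} {m : M} (hp : IsWeightedHomogeneous (w ∘ f) p m) :
    IsWeightedHomogeneous w (rename f p) m := by
  intro d hd
  obtain ⟨u, rfl, hu⟩ := coeff_rename_ne_zero f p d hd
  rw [← hp hu]
  exact Finsupp.linearCombination_mapDomain (R := ℕ) (v' := w) f u

theorem IsHomogeneous.isWeightedHomogeneous_const [AddCommMonoid M]
    {p : MvPolynomial σ R} {d : ℕ} (hp : p.IsHomogeneous d) (e : M) :
    IsWeightedHomogeneous (fun _ => e) p (d • e) := by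
  intro u hu
  rw [← hp hu, Finsupp.weight_apply, Finsupp.weight_apply, Finsupp.sum, Finsupp.sum,
    Finset.sum_smul]
  simp

attribute [local instance] weightedGradedAlgebra in
theorem mem_of_mem_sup_of_weightedHomogeneousComponent_eq_zero [AddCommMonoid M] [DecidableEq M]
    {w : σ → M} {K L : Ideal (MvPolynomial σ R)}
    (hK : K.IsHomogeneous (weightedHomogeneousSubmodule R w)) {m : M}
    (hL : ∀ q ∈ L, weightedHomogeneousComponent w m q = 0) {p : MvPolynomial σ R}
    (hp : IsWeightedHomogeneous w p m) (hpKL : p ∈ K ⊔ L) : p ∈ K := by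
  obtain ⟨p', hp', q, hq, rfl⟩ := Submodule.mem_sup.mp hpKL
  rw [← hp.weightedHomogeneousComponent_same, map_add, hL q hq, add_zero]
  exact weightedHomogeneousComponent_mem_of_mem R w hK hp' m

end MvPolynomial

open MvPolynomial

theorem IsHomogeneousIdeal.eq_span {k : Type} [Field k] {n : ℕ} {I : Ideal (Spoly k n)}
    (hI : IsHomogeneousIdeal I) : I = Ideal.span {g ∈ I | ∃ d, g.IsHomogeneous d} := by
  refine le_antisymm (fun f hf => ?_) (Ideal.span_le.mpr fun g hg => hg.1)
  rw [← sum_homogeneousComponent f]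
  exact Ideal.sum_mem _ fun d _ =>
    Ideal.subset_span ⟨hI f hf d, d, homogeneousComponent_isHomogeneous d f⟩

attribute [local instance] weightedGradedAlgebra in
theorem IsHomogeneousIdeal.isHomogeneous_map_rename {k : Type} [Field k] {n : ℕ} {τ M : Type}
    [AddCommMonoid M] [DecidableEq M] {I : Ideal (Spoly k n)} (hI : IsHomogeneousIdeal I)
    {f : Fin n → τ} {w : τ → M} {e : M} (hw : ∀ i, w (f i) = e) :
    (I.map (rename f)).IsHomogeneous (weightedHomogeneousSubmodule k w) := by
  rw [hI.eq_span, Ideal.map_span]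
  refine Ideal.homogeneous_span _ _ ?_
  rintro _ ⟨g, ⟨-, d, hg⟩, rfl⟩
  have hwf : w ∘ f = fun _ => e := funext hw
  exact ⟨d • e, (hwf ▸ hg.isWeightedHomogeneous_const e).rename⟩

section Bigrading

variable {k : Type} [Field k] {n : ℕ}

theorem weight_bidegWeight (d : (Fin n ⊕ Fin n) →₀ ℕ) :
    Finsupp.weight (bidegWeight n) d =
      (((Finsupp.weight ((Set.range Sum.inl).indicator 1) d : ℕ) : ℤ),
        ((Finsupp.weight ((Set.range Sum.inr).indicator 1) d : ℕ) : ℤ)) := by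
  simp only [Finsupp.weight_apply, Finsupp.sum, Nat.cast_sum]
  ext <;> simp only [Prod.fst_sum, Prod.snd_sum] <;> refine Finset.sum_congr rfl fun i _ => ?_ <;>
    rcases i with i | i <;> simp [bidegWeight]

theorem isWeightedHomogeneous_Qpoly :
    IsWeightedHomogeneous (bidegWeight n) (Qpoly k n) (1, 1) :=
  IsWeightedHomogeneous.sum _ _ _ fun i _ => by
    simpa [bidegWeight] using (isWeightedHomogeneous_X k (bidegWeight n) (Sum.inl i)).mul
      (isWeightedHomogeneous_X k (bidegWeight n) (Sum.inr i))

theorem mxIdeal_eq_span_X_image : mxIdeal k n = Ideal.span (X '' Set.range Sum.inl) := by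
  rw [mxIdeal, ← Set.range_comp]
  rfl

theorem myIdeal_eq_span_X_image : myIdeal k n = Ideal.span (X '' Set.range Sum.inr) := by
  rw [myIdeal, ← Set.range_comp]
  rfl

theorem MvPolynomial.IsWeightedHomogeneous.bidegree_of_mem_support {f : Tpoly k n} {γ δ : ℤ}
    (hf : IsWeightedHomogeneous (bidegWeight n) f (γ, δ)) {d : (Fin n ⊕ Fin n) →₀ ℕ}
    (hd : d ∈ f.support) :
    ((Finsupp.weight ((Set.range Sum.inl).indicator 1) d : ℕ) : ℤ) = γ ∧
      ((Finsupp.weight ((Set.range Sum.inr).indicator 1) d : ℕ) : ℤ) = δ := by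
  simpa [weight_bidegWeight] using hf (mem_support_iff.mp hd)

theorem MvPolynomial.IsWeightedHomogeneous.mem_mxIdeal_pow {f : Tpoly k n} {γ δ : ℤ}
    (hf : IsWeightedHomogeneous (bidegWeight n) f (γ, δ)) {m : ℕ} (hm : (m : ℤ) ≤ γ) :
    f ∈ mxIdeal k n ^ m := by
  rw [mxIdeal_eq_span_X_image, mem_span_X_image_pow_iff]
  intro d hd
  have := (hf.bidegree_of_mem_support hd).1
  omega

theorem MvPolynomial.IsWeightedHomogeneous.mem_myIdeal_pow {f : Tpoly k n} {γ δ : ℤ}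
    (hf : IsWeightedHomogeneous (bidegWeight n) f (γ, δ)) {m : ℕ} (hm : (m : ℤ) ≤ δ) :
    f ∈ myIdeal k n ^ m := by
  rw [myIdeal_eq_span_X_image, mem_span_X_image_pow_iff]
  intro d hd
  have := (hf.bidegree_of_mem_support hd).2
  omega

theorem weightedHomogeneousComponent_eq_zero_of_mem_mxIdeal_pow {q : Tpoly k n} {m : ℕ}
    (hq : q ∈ mxIdeal k n ^ m) {γ δ : ℤ} (hγ : γ < m) :
    weightedHomogeneousComponent (bidegWeight n) (γ, δ) q = 0 := by
  rw [mxIdeal_eq_span_X_image] at hq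
  refine weightedHomogeneousComponent_eq_zero' _ _ fun d hd hdeg => ?_
  have := le_weight_of_mem_span_X_image_pow hq d hd
  simp only [weight_bidegWeight, Prod.mk.injEq] at hdeg
  omega

theorem weightedHomogeneousComponent_eq_zero_of_mem_myIdeal_pow {q : Tpoly k n} {m : ℕ}
    (hq : q ∈ myIdeal k n ^ m) {γ δ : ℤ} (hδ : δ < m) :
    weightedHomogeneousComponent (bidegWeight n) (γ, δ) q = 0 := by
  rw [myIdeal_eq_span_X_image] at hq
  refine weightedHomogeneousComponent_eq_zero' _ _ fun d hd hdeg => ?_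
  have := le_weight_of_mem_span_X_image_pow hq d hd
  simp only [weight_bidegWeight, Prod.mk.injEq] at hdeg
  omega

attribute [local instance] weightedGradedAlgebra in
theorem IsHomogeneousIdeal.isHomogeneous_map_rename_sup_span_Qpoly {I : Ideal (Spoly k n)}
    (hI : IsHomogeneousIdeal I) :
    (I.map (rename Sum.inl) ⊔ Ideal.span {Qpoly k n}).IsHomogeneous
      (weightedHomogeneousSubmodule k (bidegWeight n)) := by
  refine (hI.isHomogeneous_map_rename (w := bidegWeight n) (f := Sum.inl) fun _ => rfl).sup
    (Ideal.homogeneous_span _ _ ?_)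
  rintro _ rfl
  exact ⟨(1, 1), isWeightedHomogeneous_Qpoly⟩

theorem frameIdeal_eq_sup (I : Ideal (Spoly k n)) (a b : ℕ) :
    frameIdeal I a b = (I.map (rename Sum.inl) ⊔ Ideal.span {Qpoly k n}) ⊔
      (mxIdeal k n ^ (a + 1) ⊔ myIdeal k n ^ (b + 1)) := by
  rw [frameIdeal]
  ac_rfl

theorem IsHomogeneousIdeal.mem_map_rename_sup_span_Qpoly_of_mem_frameIdeal
    {I : Ideal (Spoly k n)} (hI : IsHomogeneousIdeal I) {a b : ℕ} {γ δ : ℤ}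
    (hγ : γ ≤ a) (hδ : δ ≤ b) {f : Tpoly k n}
    (hf : IsWeightedHomogeneous (bidegWeight n) f (γ, δ)) (hfJ : f ∈ frameIdeal I a b) :
    f ∈ I.map (rename Sum.inl) ⊔ Ideal.span {Qpoly k n} := by
  rw [frameIdeal_eq_sup] at hfJ
  refine mem_of_mem_sup_of_weightedHomogeneousComponent_eq_zero
    hI.isHomogeneous_map_rename_sup_span_Qpoly (fun q hq => ?_) hf hfJ
  obtain ⟨qx, hqx, qy, hqy, rfl⟩ := Submodule.mem_sup.mp hq
  rw [map_add, weightedHomogeneousComponent_eq_zero_of_mem_mxIdeal_pow hqx (by omega),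
    weightedHomogeneousComponent_eq_zero_of_mem_myIdeal_pow hqy (by omega), add_zero]

end Bigrading

theorem stmt1_general {k : Type} [Field k] {n : ℕ}
    (I : Ideal (Spoly k n)) (hIhom : IsHomogeneousIdeal I)
    (a b : ℕ)
    (K J : Ideal (Tpoly k n))
    (hK : K = I.map (rename Sum.inl) ⊔ Ideal.span {Qpoly k n})
    (hJ : J = frameIdeal I a b)
    (hKJ : K ≤ J) :
    -- (i) for `γ ≤ a`, `δ ≤ b` the canonical surjection restricts to a bijection
    -- between the images of the bidegree-(γ,δ) component of `T`
    (∀ γ δ : ℤ, γ ≤ (a : ℤ) → δ ≤ (b : ℤ) →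
      Set.BijOn (Ideal.Quotient.factor (S := K) (T := J) hKJ)
        ((Ideal.Quotient.mk K) '' {f | IsWeightedHomogeneous (bidegWeight n) f (γ, δ)})
        ((Ideal.Quotient.mk J) '' {f | IsWeightedHomogeneous (bidegWeight n) f (γ, δ)})) ∧
    -- (ii) the image in `T/J` of the bidegree-(γ,δ) component vanishes for
    -- `γ ≥ a+1` or `δ ≥ b+1`
    (∀ γ δ : ℤ, ((a : ℤ) + 1 ≤ γ ∨ (b : ℤ) + 1 ≤ δ) →
      ∀ f : Tpoly k n, IsWeightedHomogeneous (bidegWeight n) f (γ, δ) →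
        Ideal.Quotient.mk J f = 0) := by
  subst hK hJ
  refine ⟨fun γ δ hγ hδ => Ideal.Quotient.bijOn_factor_image hKJ fun f hf g hg hfg =>
    hIhom.mem_map_rename_sup_span_Qpoly_of_mem_frameIdeal hγ hδ (hf.sub hg) hfg,
    fun γ δ hγδ f hf => ?_⟩
  rw [Ideal.Quotient.eq_zero_iff_mem, frameIdeal]
  rcases hγδ with hγ | hδ
  · exact Ideal.mem_sup_left <| Ideal.mem_sup_left <| Ideal.mem_sup_right <|
      hf.mem_mxIdeal_pow (by push_cast; exact hγ)
  · exact Ideal.mem_sup_left <| Ideal.mem_sup_right <| hf.mem_myIdeal_pow (by push_cast; exact hδ)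

/-- properties of the canonical surjection `T/(I·T + (Q)) → T/J`. -/
theorem stmt1 {k : Type} [Field k] {n : ℕ} (hn : 1 ≤ n)
    (I : Ideal (Spoly k n)) (hIhom : IsHomogeneousIdeal I)
    (a b : ℕ) (ha : 2 ≤ a) (hb : 1 ≤ b)
    (K J : Ideal (Tpoly k n))
    (hK : K = I.map (rename Sum.inl) ⊔ Ideal.span {Qpoly k n})
    (hJ : J = frameIdeal I a b)
    (hKJ : K ≤ J) :
    -- (i) for `γ ≤ a`, `δ ≤ b` the canonical surjection restricts to a bijection
    -- between the images of the bidegree-(γ,δ) component of `T`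
    (∀ γ δ : ℤ, γ ≤ (a : ℤ) → δ ≤ (b : ℤ) →
      Set.BijOn (Ideal.Quotient.factor (S := K) (T := J) hKJ)
        ((Ideal.Quotient.mk K) '' {f | IsWeightedHomogeneous (bidegWeight n) f (γ, δ)})
        ((Ideal.Quotient.mk J) '' {f | IsWeightedHomogeneous (bidegWeight n) f (γ, δ)})) ∧
    -- (ii) the image in `T/J` of the bidegree-(γ,δ) component vanishes for
    -- `γ ≥ a+1` or `δ ≥ b+1`
    (∀ γ δ : ℤ, ((a : ℤ) + 1 ≤ γ ∨ (b : ℤ) + 1 ≤ δ) →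
      ∀ f : Tpoly k n, IsWeightedHomogeneous (bidegWeight n) f (γ, δ) →
        Ideal.Quotient.mk J f = 0) :=
  stmt1_general I hIhom a b K J hK hJ hKJ
end
end

section
/- Suppose the characteristic of k is 2 and n ≥ 3. Let α ∈ {0,1} and let F_1, …, F_n ∈ T be bihomogeneous of bidegree (α,1) such that Σ_{i=1}^n x_i²·F_i ∈ (Q). Then F_i ∈ (Q) for all i = 1,…,n. In particular, if α = 0 then F_i = 0 for all i. -/
open MvPolynomial

noncomputable section

namespace Stmt14Aux

open Finsupp

variable {k : Type} [Field k] {n : ℕ}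

lemma sum_eq_one {c : Fin n → ℕ} (h : ∑ j, c j = 1) :
    ∃ j, c j = 1 ∧ ∀ i, i ≠ j → c i = 0 := by
  have h1 : ∃ j, c j ≠ 0 := by
    by_contra h'; push_neg at h'; simp [h'] at h
  obtain ⟨j, hj⟩ := h1
  have hle : c j ≤ 1 := h ▸ Finset.single_le_sum (f := c) (fun i _ => Nat.zero_le _) (Finset.mem_univ j)
  have hz : ∑ i ∈ Finset.univ.erase j, c i = 0 := by
    have := Finset.sum_erase_add Finset.univ c (Finset.mem_univ j)
    omega
  refine ⟨j, by omega, fun i hij => ?_⟩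
  exact (Finset.sum_eq_zero_iff.mp hz) i (Finset.mem_erase.mpr ⟨hij, Finset.mem_univ i⟩)

lemma weight_fst (μ : (Fin n ⊕ Fin n) →₀ ℕ) :
    (Finsupp.weight (bidegWeight n) μ).1 = ∑ j : Fin n, (μ (Sum.inl j) : ℤ) := by
  rw [Finsupp.weight_apply, Finsupp.sum_fintype _ _ (by intro v; simp), Prod.fst_sum]
  rw [Fintype.sum_sum_type]
  simp [bidegWeight, Prod.smul_fst]

lemma weight_snd (μ : (Fin n ⊕ Fin n) →₀ ℕ) :
    (Finsupp.weight (bidegWeight n) μ).2 = ∑ j : Fin n, (μ (Sum.inr j) : ℤ) := by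
  rw [Finsupp.weight_apply, Finsupp.sum_fintype _ _ (by intro v; simp), Prod.snd_sum]
  rw [Fintype.sum_sum_type]
  simp [bidegWeight, Prod.smul_snd]

lemma natsum_of_eq (c : Fin n → ℕ) (m : ℤ) (hm : 0 ≤ m) (h : ∑ j : Fin n, (c j : ℤ) = m) :
    ∑ j : Fin n, c j = m.toNat := by
  have : ((∑ j : Fin n, c j : ℕ) : ℤ) = m := by push_cast; exact h
  omega

lemma struct1 (μ : (Fin n ⊕ Fin n) →₀ ℕ)
    (h : Finsupp.weight (bidegWeight n) μ = ((1 : ℤ), (1 : ℤ))) :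
    ∃ j m : Fin n, μ = single (Sum.inl j) 1 + single (Sum.inr m) 1 := by
  have hx : ∑ j : Fin n, μ (Sum.inl j) = 1 := by
    have := natsum_of_eq (fun j => μ (Sum.inl j)) 1 (by norm_num)
      (by rw [← weight_fst, h])
    simpa using this
  have hy : ∑ j : Fin n, μ (Sum.inr j) = 1 := by
    have := natsum_of_eq (fun j => μ (Sum.inr j)) 1 (by norm_num)
      (by rw [← weight_snd, h])
    simpa using this
  obtain ⟨j, hj1, hj0⟩ := sum_eq_one hx
  obtain ⟨m, hm1, hm0⟩ := sum_eq_one hy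
  refine ⟨j, m, ?_⟩
  ext v
  rcases v with a | a
  · by_cases haj : a = j
    · subst haj; simp [Finsupp.add_apply, Finsupp.single_apply, hj1]
    · simp [Finsupp.add_apply, Finsupp.single_apply, hj0 a haj, Ne.symm haj, haj]
  · by_cases ham : a = m
    · subst ham; simp [Finsupp.add_apply, Finsupp.single_apply, hm1]
    · simp [Finsupp.add_apply, Finsupp.single_apply, hm0 a ham, Ne.symm ham, ham]

lemma struct0 (μ : (Fin n ⊕ Fin n) →₀ ℕ)
    (h : Finsupp.weight (bidegWeight n) μ = ((0 : ℤ), (1 : ℤ))) :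
    ∃ m : Fin n, μ = single (Sum.inr m) 1 := by
  have hx : ∑ j : Fin n, μ (Sum.inl j) = 0 := by
    have := natsum_of_eq (fun j => μ (Sum.inl j)) 0 le_rfl (by rw [← weight_fst, h])
    simpa using this
  have hy : ∑ j : Fin n, μ (Sum.inr j) = 1 := by
    have := natsum_of_eq (fun j => μ (Sum.inr j)) 1 (by norm_num)
      (by rw [← weight_snd, h])
    simpa using this
  obtain ⟨m, hm1, hm0⟩ := sum_eq_one hy
  have hx0 : ∀ a : Fin n, μ (Sum.inl a) = 0 := by
    intro a
    exact (Finset.sum_eq_zero_iff.mp hx) a (Finset.mem_univ a)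
  refine ⟨m, ?_⟩
  ext v
  rcases v with a | a
  · simp [Finsupp.single_apply, hx0 a]
  · by_cases ham : a = m
    · subst ham; simp [Finsupp.single_apply, hm1]
    · simp [Finsupp.single_apply, hm0 a ham, Ne.symm ham]


lemma X_mul_X (a b : Fin n ⊕ Fin n) :
    (X a * X b : Tpoly k n) = monomial (single a 1 + single b 1) 1 := by
  rw [X, X, monomial_mul, mul_one]

lemma pair_le_iff (a b : Fin n ⊕ Fin n) (hab : a ≠ b) (ν : (Fin n ⊕ Fin n) →₀ ℕ) :
    single a 1 + single b 1 ≤ ν ↔ 1 ≤ ν a ∧ 1 ≤ ν b := by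
  rw [Finsupp.le_def]
  constructor
  · intro h
    constructor
    · have := h a; simpa [Finsupp.add_apply, Finsupp.single_apply, Ne.symm hab] using this
    · have := h b; simpa [Finsupp.add_apply, Finsupp.single_apply, hab] using this
  · rintro ⟨h1, h2⟩ s
    have hba : ¬ (b = a) := fun hc => hab hc.symm
    by_cases hsa : a = s
    · subst hsa
      simpa [Finsupp.add_apply, Finsupp.single_apply, hba] using h1
    · by_cases hsb : b = s
      · subst hsb
        simpa [Finsupp.add_apply, Finsupp.single_apply, hsa] using h2
      · simp [Finsupp.add_apply, Finsupp.single_apply, hsa, hsb]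

lemma key {F : Fin n → Tpoly k n} {H : Tpoly k n}
    (hH : (∑ i : Fin n, (X (Sum.inl i) : Tpoly k n) ^ 2 * F i) = Qpoly k n * H)
    (ν : (Fin n ⊕ Fin n) →₀ ℕ) :
    (∑ i : Fin n, if (single (Sum.inl i) 2 : (Fin n ⊕ Fin n) →₀ ℕ) ≤ ν then
        coeff (ν - single (Sum.inl i) 2) (F i) else 0)
      = ∑ i : Fin n, if single (Sum.inl i) 1 + single (Sum.inr i) 1 ≤ ν then
          coeff (ν - (single (Sum.inl i) 1 + single (Sum.inr i) 1)) H else 0 := by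
  have h1 : (∑ i : Fin n, (X (Sum.inl i) : Tpoly k n) ^ 2 * F i)
      = ∑ i : Fin n, F i * monomial (single (Sum.inl i) 2) 1 := by
    refine Finset.sum_congr rfl fun i _ => ?_
    rw [X_pow_eq_monomial]; ring
  have h2 : Qpoly k n * H
      = ∑ i : Fin n, H * monomial (single (Sum.inl i) 1 + single (Sum.inr i) 1) 1 := by
    rw [Qpoly, Finset.sum_mul]
    refine Finset.sum_congr rfl fun i _ => ?_
    rw [X_mul_X]; ring
  have e := congrArg (MvPolynomial.coeff ν) hH
  rw [h1, h2, coeff_sum, coeff_sum] at e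
  simp only [coeff_mul_monomial', mul_one] at e
  convert e

lemma Q_hom : IsWeightedHomogeneous (bidegWeight n) (Qpoly k n) (1, 1) := by
  rw [← mem_weightedHomogeneousSubmodule]
  apply Submodule.sum_mem
  intro i _
  rw [mem_weightedHomogeneousSubmodule]
  have := (isWeightedHomogeneous_X k (bidegWeight n) (Sum.inl i)).mul
    (isWeightedHomogeneous_X k (bidegWeight n) (Sum.inr i))
  simpa [bidegWeight, Prod.mk_add_mk] using this

lemma mono_eq_iff (p j m : Fin n) :
    (single (Sum.inl p) 1 + single (Sum.inr p) 1 : (Fin n ⊕ Fin n) →₀ ℕ)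
      = single (Sum.inl j) 1 + single (Sum.inr m) 1 ↔ p = j ∧ p = m := by
  constructor
  · intro h
    have h1 := DFunLike.congr_fun h (Sum.inl j)
    have h2 := DFunLike.congr_fun h (Sum.inr m)
    simp only [Finsupp.add_apply, Finsupp.single_apply] at h1 h2
    constructor
    · by_cases hpj : p = j
      · exact hpj
      · simp [hpj, Sum.inl.injEq, Sum.inr.injEq] at h1
    · by_cases hpm : p = m
      · exact hpm
      · simp [hpm, Sum.inl.injEq, Sum.inr.injEq] at h2
  · rintro ⟨rfl, rfl⟩; rfl

lemma coeff_Q (j m : Fin n) :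
    coeff (single (Sum.inl j) 1 + single (Sum.inr m) 1) (Qpoly k n)
      = if j = m then (1 : k) else 0 := by
  rw [Qpoly, coeff_sum]
  simp_rw [X_mul_X, coeff_monomial]
  by_cases hjm : j = m
  · subst hjm
    rw [if_pos rfl, Finset.sum_eq_single j]
    · rw [if_pos rfl]
    · intro p _ hpj
      exact if_neg (fun hc => hpj ((mono_eq_iff p j j).mp hc).1)
    · intro h; exact absurd (Finset.mem_univ j) h
  · rw [if_neg hjm]
    apply Finset.sum_eq_zero
    intro p _
    refine if_neg (fun hc => ?_)
    obtain ⟨rfl, rfl⟩ := (mono_eq_iff p j m).mp hc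
    exact hjm rfl

lemma exists_third (hn : 3 ≤ n) (t j : Fin n) : ∃ l : Fin n, l ≠ t ∧ l ≠ j := by
  by_contra h
  push_neg at h
  have hsub : (Finset.univ : Finset (Fin n)) ⊆ {t, j} := by
    intro l _
    by_cases hlt : l = t
    · subst hlt; simp
    · have := h l hlt; subst this; simp
  have := Finset.card_le_card hsub
  simp only [Finset.card_univ, Fintype.card_fin] at this
  have : n ≤ 2 := le_trans this (Finset.card_insert_le _ _ |>.trans (by simp))
  omega

end Stmt14Aux

namespace Stmt14Aux
open Finsupp
variable {k : Type} [Field k] {n : ℕ}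

lemma hvan (hn : 3 ≤ n) {F : Fin n → Tpoly k n} {H : Tpoly k n}
    (hH : (∑ i : Fin n, (X (Sum.inl i) : Tpoly k n) ^ 2 * F i) = Qpoly k n * H)
    (t : Fin n) : coeff (single (Sum.inl t) 1) H = 0 := by
  obtain ⟨j, hjt, -⟩ := exists_third hn t t
  have hk := key hH (single (Sum.inl j) 1 + single (Sum.inl t) 1 + single (Sum.inr j) 1)
  set ρ := single (Sum.inl j) 1 + single (Sum.inl t) 1 + single (Sum.inr j) 1 with hρ
  have hval : ∀ i : Fin n, ρ (Sum.inl i) = (if j = i then 1 else 0) + (if t = i then 1 else 0) := by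
    intro i
    simp [hρ, Finsupp.add_apply, Finsupp.single_apply]
  have hvalr : ∀ i : Fin n, ρ (Sum.inr i) = (if j = i then 1 else 0) := by
    intro i
    simp [hρ, Finsupp.add_apply, Finsupp.single_apply]
  have lhs0 : (∑ i : Fin n, if (single (Sum.inl i) 2 : (Fin n ⊕ Fin n) →₀ ℕ) ≤ ρ then
      coeff (ρ - single (Sum.inl i) 2) (F i) else 0) = 0 := by
    refine Finset.sum_eq_zero fun i _ => if_neg ?_
    rw [Finsupp.single_le_iff, hval i]
    by_cases h1 : j = i
    · subst h1; simp [Ne.symm hjt]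
    · simp only [if_neg h1, zero_add]; split_ifs <;> omega
  rw [lhs0] at hk
  have rhs : ∀ i : Fin n, i ≠ j →
      (if single (Sum.inl i) 1 + single (Sum.inr i) 1 ≤ ρ then
        coeff (ρ - (single (Sum.inl i) 1 + single (Sum.inr i) 1)) H else 0) = 0 := by
    intro i hij
    refine if_neg fun hc => ?_
    have := ((pair_le_iff _ _ (by simp) ρ).mp hc).2
    rw [hvalr i, if_neg (fun h => hij h.symm)] at this
    omega
  rw [Finset.sum_eq_single_of_mem j (Finset.mem_univ j) (fun i _ hij => rhs i hij)] at hk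
  have hcond : single (Sum.inl j) 1 + single (Sum.inr j) 1 ≤ ρ := by
    rw [pair_le_iff _ _ (by simp), hval j, hvalr j]
    simp
  rw [if_pos hcond] at hk
  have hsub : ρ - (single (Sum.inl j) 1 + single (Sum.inr j) 1) = single (Sum.inl t) 1 := by
    ext v
    rcases v with a | a <;>
      simp only [hρ, Finsupp.tsub_apply, Finsupp.add_apply, Finsupp.single_apply] <;>
      split_ifs <;> omega
  rw [hsub] at hk
  exact hk.symm

lemma case0 (hn : 3 ≤ n) {F : Fin n → Tpoly k n} {H : Tpoly k n}
    (hH : (∑ i : Fin n, (X (Sum.inl i) : Tpoly k n) ^ 2 * F i) = Qpoly k n * H)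
    (hF : ∀ i, IsWeightedHomogeneous (bidegWeight n) (F i) ((0 : ℤ), (1 : ℤ)))
    (t : Fin n) : F t = 0 := by
  apply MvPolynomial.ext
  intro μ
  rw [coeff_zero]
  by_cases hw : Finsupp.weight (bidegWeight n) μ = ((0 : ℤ), (1 : ℤ))
  swap
  · exact (hF t).coeff_eq_zero μ hw
  obtain ⟨m, rfl⟩ := struct0 μ hw
  have hk := key hH (single (Sum.inr m) 1 + single (Sum.inl t) 2)
  set ν := single (Sum.inr m) 1 + single (Sum.inl t) 2 with hν
  have hval : ∀ i : Fin n, ν (Sum.inl i) = (if t = i then 2 else 0) := by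
    intro i; simp [hν, Finsupp.add_apply, Finsupp.single_apply]
  have hvalr : ∀ i : Fin n, ν (Sum.inr i) = (if m = i then 1 else 0) := by
    intro i; simp [hν, Finsupp.add_apply, Finsupp.single_apply]
  have lhs : (∑ i : Fin n, if (single (Sum.inl i) 2 : (Fin n ⊕ Fin n) →₀ ℕ) ≤ ν then
      coeff (ν - single (Sum.inl i) 2) (F i) else 0) = coeff (single (Sum.inr m) 1) (F t) := by
    rw [Finset.sum_eq_single_of_mem t (Finset.mem_univ t)]
    · rw [if_pos (by rw [Finsupp.single_le_iff, hval t]; simp), hν, add_tsub_cancel_right]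
    · intro i _ hit
      refine if_neg fun hc => ?_
      rw [Finsupp.single_le_iff, hval i, if_neg (fun h => hit h.symm)] at hc
      omega
  rw [lhs] at hk
  by_cases hmt : m = t
  · subst hmt
    rw [Finset.sum_eq_single_of_mem m (Finset.mem_univ m)] at hk
    · rw [if_pos (by rw [pair_le_iff _ _ (by simp), hval m, hvalr m]; simp)] at hk
      have hsub : ν - (single (Sum.inl m) 1 + single (Sum.inr m) 1) = single (Sum.inl m) 1 := by
        ext v
        rcases v with a | a <;>
          simp only [hν, Finsupp.tsub_apply, Finsupp.add_apply, Finsupp.single_apply] <;>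
          split_ifs <;> omega
      rw [hsub, hvan hn hH m] at hk
      exact hk
    · intro i _ him
      refine if_neg fun hc => ?_
      have := ((pair_le_iff _ _ (by simp) ν).mp hc).2
      rw [hvalr i, if_neg (fun h => him h.symm)] at this
      omega
  · rw [Finset.sum_eq_zero] at hk
    · exact hk
    intro i _
    refine if_neg fun hc => ?_
    have h2 := ((pair_le_iff _ _ (by simp) ν).mp hc).2
    have h1 := ((pair_le_iff _ _ (by simp) ν).mp hc).1
    rw [hvalr i] at h2
    rw [hval i] at h1
    by_cases hmi : m = i
    · subst hmi
      rw [if_neg (fun h => hmt h.symm)] at h1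
      omega
    · rw [if_neg hmi] at h2; omega


lemma evan (hn : 3 ≤ n) {F : Fin n → Tpoly k n} {H : Tpoly k n}
    (hH : (∑ i : Fin n, (X (Sum.inl i) : Tpoly k n) ^ 2 * F i) = Qpoly k n * H)
    (t j : Fin n) (hjt : j ≠ t) :
    coeff (single (Sum.inl t) 1 + single (Sum.inl j) 1) H = 0 := by
  obtain ⟨l, hlt, hlj⟩ := exists_third hn t j
  have hk := key hH (single (Sum.inl t) 1 + single (Sum.inl j) 1 + single (Sum.inl l) 1
    + single (Sum.inr l) 1)
  set ρ := single (Sum.inl t) 1 + single (Sum.inl j) 1 + single (Sum.inl l) 1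
    + single (Sum.inr l) 1 with hρ
  have hval : ∀ i : Fin n, ρ (Sum.inl i)
      = (if t = i then 1 else 0) + (if j = i then 1 else 0) + (if l = i then 1 else 0) := by
    intro i; simp [hρ, Finsupp.add_apply, Finsupp.single_apply]
  have hvalr : ∀ i : Fin n, ρ (Sum.inr i) = (if l = i then 1 else 0) := by
    intro i; simp [hρ, Finsupp.add_apply, Finsupp.single_apply]
  have lhs0 : (∑ i : Fin n, if (single (Sum.inl i) 2 : (Fin n ⊕ Fin n) →₀ ℕ) ≤ ρ then
      coeff (ρ - single (Sum.inl i) 2) (F i) else 0) = 0 := by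
    refine Finset.sum_eq_zero fun i _ => if_neg ?_
    rw [Finsupp.single_le_iff, hval i]
    by_cases h1 : t = i
    · subst h1; simp [hjt, hlt]
    · rw [if_neg h1]
      by_cases h2 : j = i
      · subst h2; simp [hlj]
      · rw [if_neg h2]; split_ifs <;> omega
  rw [lhs0] at hk
  rw [Finset.sum_eq_single_of_mem l (Finset.mem_univ l)] at hk
  · rw [if_pos (by rw [pair_le_iff _ _ (by simp), hval l, hvalr l]; simp)] at hk
    have hsub : ρ - (single (Sum.inl l) 1 + single (Sum.inr l) 1)
        = single (Sum.inl t) 1 + single (Sum.inl j) 1 := by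
      ext v
      rcases v with a | a <;>
        simp only [hρ, Finsupp.tsub_apply, Finsupp.add_apply, Finsupp.single_apply] <;>
        split_ifs <;> omega
    rw [hsub] at hk
    exact hk.symm
  · intro i _ hil
    refine if_neg fun hc => ?_
    have := ((pair_le_iff _ _ (by simp) ρ).mp hc).2
    rw [hvalr i, if_neg (fun h => hil h.symm)] at this
    omega

lemma case1 (hn : 3 ≤ n) {F : Fin n → Tpoly k n} {H : Tpoly k n}
    (hH : (∑ i : Fin n, (X (Sum.inl i) : Tpoly k n) ^ 2 * F i) = Qpoly k n * H)
    (hF : ∀ i, IsWeightedHomogeneous (bidegWeight n) (F i) ((1 : ℤ), (1 : ℤ)))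
    (t : Fin n) : F t = C (coeff (single (Sum.inl t) 2) H) * Qpoly k n := by
  set d := coeff (single (Sum.inl t) 2) H with hd
  apply MvPolynomial.ext
  intro μ
  rw [coeff_C_mul]
  by_cases hw : Finsupp.weight (bidegWeight n) μ = ((1 : ℤ), (1 : ℤ))
  swap
  · rw [(hF t).coeff_eq_zero μ hw, Q_hom.coeff_eq_zero μ hw, mul_zero]
  obtain ⟨j, m, rfl⟩ := struct1 μ hw
  rw [coeff_Q]
  set μ := single (Sum.inl j) 1 + single (Sum.inr m) 1 with hμ
  have hk := key hH (μ + single (Sum.inl t) 2)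
  set ν := μ + single (Sum.inl t) 2 with hν
  have hval : ∀ i : Fin n, ν (Sum.inl i)
      = (if j = i then 1 else 0) + (if t = i then 2 else 0) := by
    intro i; simp [hν, hμ, Finsupp.add_apply, Finsupp.single_apply]
  have hvalr : ∀ i : Fin n, ν (Sum.inr i) = (if m = i then 1 else 0) := by
    intro i; simp [hν, hμ, Finsupp.add_apply, Finsupp.single_apply]
  have lhs : (∑ i : Fin n, if (single (Sum.inl i) 2 : (Fin n ⊕ Fin n) →₀ ℕ) ≤ ν then
      coeff (ν - single (Sum.inl i) 2) (F i) else 0) = coeff μ (F t) := by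
    rw [Finset.sum_eq_single_of_mem t (Finset.mem_univ t)]
    · rw [if_pos (by rw [Finsupp.single_le_iff, hval t]; simp), hν, add_tsub_cancel_right]
    · intro i _ hit
      refine if_neg fun hc => ?_
      rw [Finsupp.single_le_iff, hval i] at hc
      rw [if_neg (show ¬ t = i from fun h => hit h.symm)] at hc
      split_ifs at hc <;> omega
  rw [lhs] at hk
  by_cases hmt : m = t
  · subst hmt
    rw [Finset.sum_eq_single_of_mem m (Finset.mem_univ m)] at hk
    · rw [if_pos (by rw [pair_le_iff _ _ (by simp), hval m, hvalr m]; simp)] at hk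
      have hsub : ν - (single (Sum.inl m) 1 + single (Sum.inr m) 1)
          = single (Sum.inl j) 1 + single (Sum.inl m) 1 := by
        ext v
        rcases v with a | a <;>
          simp only [hν, hμ, Finsupp.tsub_apply, Finsupp.add_apply, Finsupp.single_apply] <;>
          split_ifs <;> omega
      rw [hsub] at hk
      by_cases hjm : j = m
      · subst hjm
        have h2s : (single (Sum.inl j) 1 + single (Sum.inl j) 1 : (Fin n ⊕ Fin n) →₀ ℕ)
            = single (Sum.inl j) 2 := by
          rw [← Finsupp.single_add]
        rw [h2s] at hk
        rw [hk, if_pos rfl, mul_one, hd]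
      · rw [if_neg hjm, mul_zero, hk, add_comm, evan hn hH m j hjm]
    · intro i _ him
      refine if_neg fun hc => ?_
      have := ((pair_le_iff _ _ (by simp) ν).mp hc).2
      rw [hvalr i, if_neg (fun h => him h.symm)] at this
      omega
  · by_cases hjm : j = m
    · subst hjm
      rw [Finset.sum_eq_single_of_mem j (Finset.mem_univ j)] at hk
      · rw [if_pos (by rw [pair_le_iff _ _ (by simp), hval j, hvalr j]; simp)] at hk
        have hsub : ν - (single (Sum.inl j) 1 + single (Sum.inr j) 1)
            = single (Sum.inl t) 2 := by
          ext v
          rcases v with a | a <;>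
            simp only [hν, hμ, Finsupp.tsub_apply, Finsupp.add_apply, Finsupp.single_apply] <;>
            split_ifs <;> omega
        rw [hsub] at hk
        rw [hk, if_pos rfl, mul_one, hd]
      · intro i _ hij
        refine if_neg fun hc => ?_
        have := ((pair_le_iff _ _ (by simp) ν).mp hc).2
        rw [hvalr i, if_neg (fun h => hij h.symm)] at this
        omega
    · rw [if_neg hjm, mul_zero]
      rw [Finset.sum_eq_zero] at hk
      · exact hk
      intro i _
      refine if_neg fun hc => ?_
      have h1 := ((pair_le_iff _ _ (by simp) ν).mp hc).1
      have h2 := ((pair_le_iff _ _ (by simp) ν).mp hc).2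
      rw [hval i] at h1
      rw [hvalr i] at h2
      by_cases hmi : m = i
      · subst hmi
        rw [if_neg hjm, if_neg (show ¬ t = m from fun h => hmt h.symm)] at h1
        omega
      · rw [if_neg hmi] at h2; omega

end Stmt14Aux

/-- in characteristic 2, with `n ≥ 3`: if `F_1, …, F_n` are
bihomogeneous of bidegree `(α,1)` with `α ∈ {0,1}` and `Σ x_i² F_i ∈ (Q)`, then
all `F_i ∈ (Q)`; if moreover `α = 0` then all `F_i = 0`. -/
theorem stmt14 {k : Type} [Field k] {n : ℕ} (hn : 3 ≤ n)
    (hchar : ringChar k = 2)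
    (α : ℤ) (hα : α = 0 ∨ α = 1)
    (F : Fin n → Tpoly k n)
    (hF : ∀ i, IsWeightedHomogeneous (bidegWeight n) (F i) (α, 1))
    (hsum : (∑ i : Fin n, (X (Sum.inl i) : Tpoly k n) ^ 2 * F i) ∈
      Ideal.span {Qpoly k n}) :
    (∀ i, F i ∈ Ideal.span {Qpoly k n}) ∧ (α = 0 → ∀ i, F i = 0) := by
  classical
  obtain ⟨H, hH⟩ := Ideal.mem_span_singleton.mp hsum
  rcases hα with rfl | rfl
  · have h0 : ∀ i, F i = 0 := fun t => Stmt14Aux.case0 hn hH (fun i => hF i) t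
    exact ⟨fun i => by rw [h0 i]; exact Ideal.zero_mem _, fun _ i => h0 i⟩
  · refine ⟨fun t => ?_, fun h => absurd h one_ne_zero⟩
    rw [Stmt14Aux.case1 hn hH (fun i => hF i) t]
    exact Ideal.mul_mem_left _ _ (Ideal.subset_span (Set.mem_singleton _))
end
end
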